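/- For any R-module M, Gwid_R(M) ≤ id_R(M); and if the weak injective dimension of M is finite then Gwid_R(M) = id_R(M). -/

import Mathlib

open CategoryTheory

universe u

noncomputable section

variable (R : Type u) [Ring R]

/-- Vanishing of `Ext^n_R(N, M)` for left `R`-modules, expressed via the `Ext` bifunctor
on the `ℤ`-linear abelian category `ModuleCat R`. -/
def ExtVanish (n : ℕ) (N M : ModuleCat.{u} R) : Prop :=
  Subsingleton (((_root_.Ext ℤ (ModuleCat.{u} R) n).obj (Opposite.op N)).obj M)

/-- An `R`-module is super finitely presented if it admits a resolution by
finitely generated projective modules. -/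
def SuperFinitelyPresented (N : ModuleCat.{u} R) : Prop :=
  ∃ (F : ℕ → ModuleCat.{u} R) (d : ∀ n, F (n + 1) →ₗ[R] F n) (ε : F 0 →ₗ[R] N),
    (∀ n, Module.Finite R (F n)) ∧ (∀ n, Module.Projective R (F n)) ∧
    Function.Surjective ε ∧ Function.Exact (d 0) ε ∧
    (∀ n, Function.Exact (d (n + 1)) (d n))

/-- An `R`-module `W` is weak injective if `Ext^1_R(N, W) = 0` for every super finitely
presented module `N`. -/
def WeakInjective (W : ModuleCat.{u} R) : Prop :=
  ∀ N : ModuleCat.{u} R, SuperFinitelyPresented R N → ExtVanish R 1 N W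

/-- `wid_R M ≤ n` : `Ext^{n+1}_R(N, M) = 0` for every super finitely presented `N`. -/
def WidLE (M : ModuleCat.{u} R) (n : ℕ) : Prop :=
  ∀ N : ModuleCat.{u} R, SuperFinitelyPresented R N → ExtVanish R (n + 1) N M

/-- The weak injective dimension, as an element of `ℕ∞`. -/
def Wid (M : ModuleCat.{u} R) : ℕ∞ :=
  sInf {c : ℕ∞ | ∃ n : ℕ, c = n ∧ WidLE R M n}

/-- A doubly infinite exact complex of injective modules which stays exact after applying
`Hom_R(W, -)` for every module `W` in the test class `𝒯`. -/
def IsTotallyAcyclicInjComplex (𝒯 : ModuleCat.{u} R → Prop)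
    (I : ℤ → ModuleCat.{u} R) (d : ∀ n : ℤ, I n →ₗ[R] I (n + 1)) : Prop :=
  (∀ n, Module.Injective R (I n)) ∧
  (∀ n, Function.Exact (d n) (d (n + 1))) ∧
  (∀ W : ModuleCat.{u} R, 𝒯 W → ∀ n,
    Function.Exact (fun g : W →ₗ[R] I n => (d n).comp g)
      (fun g : W →ₗ[R] I (n + 1) => (d (n + 1)).comp g))

/-- `M` is Gorenstein injective relative to the test class `𝒯` : `M` is the cokernel
`Coker (I_1 → I_0)` of a `Hom(𝒯, -)`-exact exact complex of injective modules. -/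
def GorensteinRelInjective (𝒯 : ModuleCat.{u} R → Prop) (M : ModuleCat.{u} R) : Prop :=
  ∃ (I : ℤ → ModuleCat.{u} R) (d : ∀ n : ℤ, I n →ₗ[R] I (n + 1)) (π : I 0 →ₗ[R] M),
    IsTotallyAcyclicInjComplex R 𝒯 I d ∧
    Function.Surjective π ∧ Function.Exact (d (-1)) π

/-- Gorenstein weak injective modules: the test class is that of weak injective modules. -/
def GorensteinWeakInjective (M : ModuleCat.{u} R) : Prop :=
  GorensteinRelInjective R (WeakInjective R) M

/-- Gorenstein injective modules: the test class is that of injective modules. -/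
def GorensteinInjective (M : ModuleCat.{u} R) : Prop :=
  GorensteinRelInjective R (fun E => Module.Injective R E) M

/-- The data of an exact sequence `0 → M → G^0 → ⋯ → G^n → 0` (the modules `G^i` for
`i > n` being trivial). -/
def IsFiniteCoresolution (M : ModuleCat.{u} R) (n : ℕ) (G : ℕ → ModuleCat.{u} R)
    (d : ∀ i, G i →ₗ[R] G (i + 1)) (ε : M →ₗ[R] G 0) : Prop :=
  Function.Injective ε ∧ Function.Exact ε (d 0) ∧
  (∀ i, Function.Exact (d i) (d (i + 1))) ∧
  (∀ i, n < i → ∀ x : G i, x = 0)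

/-- `Gwid_R M ≤ n` : `M` has a coresolution of length `n` by Gorenstein weak injective
modules. -/
def GwidLE (M : ModuleCat.{u} R) (n : ℕ) : Prop :=
  ∃ (G : ℕ → ModuleCat.{u} R) (d : ∀ i, G i →ₗ[R] G (i + 1)) (ε : M →ₗ[R] G 0),
    IsFiniteCoresolution R M n G d ε ∧ ∀ i, GorensteinWeakInjective R (G i)

/-- The Gorenstein weak injective dimension, as an element of `ℕ∞`. -/
def Gwid (M : ModuleCat.{u} R) : ℕ∞ :=
  sInf {c : ℕ∞ | ∃ n : ℕ, c = n ∧ GwidLE R M n}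

/-- `Gid_R M ≤ n`, via coresolutions by Gorenstein injective modules. -/
def GidLE (M : ModuleCat.{u} R) (n : ℕ) : Prop :=
  ∃ (G : ℕ → ModuleCat.{u} R) (d : ∀ i, G i →ₗ[R] G (i + 1)) (ε : M →ₗ[R] G 0),
    IsFiniteCoresolution R M n G d ε ∧ ∀ i, GorensteinInjective R (G i)

/-- The Gorenstein injective dimension, as an element of `ℕ∞`. -/
def Gid (M : ModuleCat.{u} R) : ℕ∞ :=
  sInf {c : ℕ∞ | ∃ n : ℕ, c = n ∧ GidLE R M n}

/-- `id_R M ≤ n`, via coresolutions by injective modules. -/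
def IdLE (M : ModuleCat.{u} R) (n : ℕ) : Prop :=
  ∃ (G : ℕ → ModuleCat.{u} R) (d : ∀ i, G i →ₗ[R] G (i + 1)) (ε : M →ₗ[R] G 0),
    IsFiniteCoresolution R M n G d ε ∧ ∀ i, Module.Injective R (G i)

/-- The injective dimension, as an element of `ℕ∞`. -/
def Idim (M : ModuleCat.{u} R) : ℕ∞ :=
  sInf {c : ℕ∞ | ∃ n : ℕ, c = n ∧ IdLE R M n}

/-- The data of an exact sequence `0 → P_n → ⋯ → P_0 → M → 0`. -/
def IsFiniteResolution (M : ModuleCat.{u} R) (n : ℕ) (P : ℕ → ModuleCat.{u} R)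
    (d : ∀ i, P (i + 1) →ₗ[R] P i) (ε : P 0 →ₗ[R] M) : Prop :=
  Function.Surjective ε ∧ Function.Exact (d 0) ε ∧
  (∀ i, Function.Exact (d (i + 1)) (d i)) ∧
  (∀ i, n < i → ∀ x : P i, x = 0)

/-- `pd_R M ≤ n`, via resolutions by projective modules. -/
def PdLE (M : ModuleCat.{u} R) (n : ℕ) : Prop :=
  ∃ (P : ℕ → ModuleCat.{u} R) (d : ∀ i, P (i + 1) →ₗ[R] P i) (ε : P 0 →ₗ[R] M),
    IsFiniteResolution R M n P d ε ∧ ∀ i, Module.Projective R (P i)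

end

variable (R : Type u) [Ring R]

/-- A short exact sequence `0 → L → M → N → 0` of `R`-modules. -/
def ShortExactSeq (L M N : ModuleCat.{u} R) (f : L →ₗ[R] M) (g : M →ₗ[R] N) : Prop :=
  Function.Injective f ∧ Function.Surjective g ∧ Function.Exact f g

/-- Exactness of `0 → Hom(C, X) → Hom(B, X) → Hom(A, X) → 0` induced by
`0 → A → B → C → 0`. -/
def HomContraExact (X : ModuleCat.{u} R) {A B C : ModuleCat.{u} R}
    (f : A →ₗ[R] B) (g : B →ₗ[R] C) : Prop :=
  Function.Injective (fun h : C →ₗ[R] X => h.comp g) ∧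
  Function.Exact (fun h : C →ₗ[R] X => h.comp g) (fun h : B →ₗ[R] X => h.comp f) ∧
  Function.Surjective (fun h : B →ₗ[R] X => h.comp f)

/-- A short exact sequence is `GWI`-copure exact if `Hom_R(-, X)` leaves it exact for
every Gorenstein weak injective module `X`. -/
def GWICopureExact {A B C : ModuleCat.{u} R} (f : A →ₗ[R] B) (g : B →ₗ[R] C) : Prop :=
  ShortExactSeq R A B C f g ∧
  ∀ X : ModuleCat.{u} R, GorensteinWeakInjective R X → HomContraExact R X f g

/-- `M` is `GWI`-copure injective if `Hom_R(-, M)` is exact on every `GWI`-copure exact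
sequence. -/
def GWICopureInjectiveMod (M : ModuleCat.{u} R) : Prop :=
  ∀ (A B C : ModuleCat.{u} R) (f : A →ₗ[R] B) (g : B →ₗ[R] C),
    GWICopureExact R f g → HomContraExact R M f g

/-- `φ : M → G` is a Gorenstein weak injective preenvelope of `M`. -/
def GWIPreenvelope (M G : ModuleCat.{u} R) (φ : M →ₗ[R] G) : Prop :=
  GorensteinWeakInjective R G ∧
  ∀ G' : ModuleCat.{u} R, GorensteinWeakInjective R G' →
    ∀ f : M →ₗ[R] G', ∃ g : G →ₗ[R] G', g.comp φ = f

/-- A `WI`-pure Tate injective resolution of `M` : an injective resolution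
`0 → M → E^0 → E^1 → ⋯`, a `WI`-pure exact complex `T` of injectives, and a chain map
`u : E → T` which is an isomorphism in all sufficiently large degrees. -/
def WIPureTateInjectiveResolution (M : ModuleCat.{u} R)
    (E : ℕ → ModuleCat.{u} R) (dE : ∀ n, E n →ₗ[R] E (n + 1)) (ε : M →ₗ[R] E 0)
    (T : ℤ → ModuleCat.{u} R) (dT : ∀ n : ℤ, T n →ₗ[R] T (n + 1))
    (u : ∀ n : ℕ, E n →ₗ[R] T n) : Prop :=
  (∀ n, Module.Injective R (E n)) ∧ Function.Injective ε ∧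
  Function.Exact ε (dE 0) ∧ (∀ n, Function.Exact (dE n) (dE (n + 1))) ∧
  IsTotallyAcyclicInjComplex R (WeakInjective R) T dT ∧
  (∀ n : ℕ, (dT n).comp (u n) = (u (n + 1)).comp (dE n)) ∧
  ∃ N : ℕ, ∀ n, N ≤ n → Function.Bijective (u n)

/-- Vanishing of the relative Tate cohomology `Êxt^i_GWI(N, M)` for all `i ∈ ℤ`,
computed from the `WI`-pure exact complex `T` : the complex `Hom_R(N, T)` is exact. -/
def ExtHatVanishesAll (N : ModuleCat.{u} R) (T : ℤ → ModuleCat.{u} R)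
    (dT : ∀ n : ℤ, T n →ₗ[R] T (n + 1)) : Prop :=
  ∀ n : ℤ, Function.Exact (fun g : N →ₗ[R] T n => (dT n).comp g)
    (fun g : N →ₗ[R] T (n + 1) => (dT (n + 1)).comp g)

universe v

/-!
Injective modules are Gorenstein weak injective: the constant complex `⋯ → E → E → ⋯` whose
differentials are alternately `id` and `0` is totally acyclic. So injective coresolutions are
Gorenstein weak injective ones, and `Gwid M ≤ id M`.

Conversely, `Ext^{≥1}(W, G) = 0` whenever `W` is weak injective and `G` Gorenstein weak injective
(shift dimensions along the cycles of the complex defining `G`), so `Gwid M ≤ n` gives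
`Ext^{>n}(W, M) = 0`. Let `wid M ≤ k` and take `0 → M → E → C → 0` with `E` injective: `C` again
has finite weak injective dimension and `Ext^{>n-1}(W, C) = 0`, which reduces `id M ≤ n` to the
case `n = 0`. There the cosyzygy `C` is weak injective (directly if `k = 0`, and by induction on
`k` even injective otherwise), so `Ext^1(C, M) = 0`, the sequence splits and `M` is a direct
summand of `E`.

`Ext^{s+1}(N, M) = 0` is used through a concrete projective resolution `F → N`: it says that every
`f : F_{s+1} → M` vanishing on the image of `F_{s+2}` factors through `F_{s+1} → F_s`.
-/

section LinearAlgebra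

variable {R : Type*} [Ring R] {A B C X : Type*} [AddCommGroup A] [Module R A] [AddCommGroup B]
  [Module R B] [AddCommGroup C] [Module R C] [AddCommGroup X] [Module R X]
  {f : A →ₗ[R] B} {g : B →ₗ[R] C}

theorem Function.Exact.rangeRestrict (h : Function.Exact f g) : Function.Exact f g.rangeRestrict :=
  LinearMap.exact_iff.2 (by rw [LinearMap.ker_rangeRestrict, h.linearMap_ker_eq])

theorem Function.Exact.range_subtype (h : Function.Exact f g) :
    Function.Exact (LinearMap.range f).subtype g :=
  LinearMap.exact_iff.2 (by rw [Submodule.range_subtype, h.linearMap_ker_eq])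

theorem Function.Exact.exists_lift (h : Function.Exact f g) (hf : Function.Injective f)
    (u : X →ₗ[R] B) (hu : g ∘ₗ u = 0) : ∃ w : X →ₗ[R] A, f ∘ₗ w = u := by
  have hrange (x : X) : u x ∈ LinearMap.range f := (h (u x)).1 (LinearMap.congr_fun hu x)
  refine ⟨(LinearEquiv.ofInjective f hf).symm.toLinearMap ∘ₗ u.codRestrict _ hrange, ?_⟩
  ext x
  simp

theorem Function.Exact.exists_desc (h : Function.Exact f g) (hg : Function.Surjective g)
    (u : B →ₗ[R] X) (hu : u ∘ₗ f = 0) : ∃ w : C →ₗ[R] X, w ∘ₗ g = u :=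
  ⟨(LinearMap.range f).liftQ u (LinearMap.range_le_ker_iff.2 hu) ∘ₗ
    (h.linearEquivOfSurjective hg).symm.toLinearMap, by ext; simp⟩

theorem Function.Exact.exists_desc_of_injective {T : Type v} [AddCommGroup T] [Module R T]
    [Small.{v} R] (hT : Module.Injective R T) (h : Function.Exact f g) (u : B →ₗ[R] T)
    (hu : u ∘ₗ f = 0) : ∃ w : C →ₗ[R] T, w ∘ₗ g = u := by
  obtain ⟨w₀, hw₀⟩ := h.rangeRestrict.exists_desc g.surjective_rangeRestrict u hu
  obtain ⟨w, hw⟩ := Module.Injective.extension_property (inj := hT) R T _ _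
    (LinearMap.range g).subtype (Submodule.injective_subtype _) w₀
  exact ⟨w, by rw [← hw₀, ← hw, LinearMap.comp_assoc]; rfl⟩

theorem Module.Injective.of_retract {Q E : Type v} [AddCommGroup Q] [Module R Q] [AddCommGroup E]
    [Module R E] (hE : Module.Injective R E) (i : Q →ₗ[R] E) (r : E →ₗ[R] Q)
    (hri : r ∘ₗ i = LinearMap.id) : Module.Injective R Q :=
  ⟨fun _ _ _ _ _ _ f hf g => by
    obtain ⟨h, hh⟩ := hE.out f hf (i ∘ₗ g)
    exact ⟨r ∘ₗ h, fun x => by simpa [hh] using LinearMap.congr_fun hri (g x)⟩⟩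

theorem Module.injective_of_subsingleton (Q : Type v) [AddCommGroup Q] [Module R Q]
    [Subsingleton Q] : Module.Injective R Q :=
  ⟨fun _ _ _ _ _ _ _ _ _ => ⟨0, fun _ => Subsingleton.elim _ _⟩⟩

theorem Function.exact_of_eq_ite_even {Y : Type*} [AddCommGroup Y] (φ : ℤ → Y → Y)
    (hφ : ∀ t y, φ t y = if Even t then y else 0) (t : ℤ) : Function.Exact (φ t) (φ (t + 1)) := by
  intro y
  rcases Int.even_or_odd t with ht | ht
  · simp [hφ, ht]
  · simp [hφ, Int.not_even_iff_odd.2 ht, ht, eq_comm]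

end LinearAlgebra

section

variable {R}

noncomputable def freeSyzygy (N : ModuleCat.{u} R) : ℕ → ModuleCat.{u} R
  | 0 => N
  | n + 1 => ModuleCat.of R (LinearMap.ker (Finsupp.linearCombination R
      (id : freeSyzygy N n → freeSyzygy N n)))

structure LinearProjectiveResolution (N : ModuleCat.{u} R) where
  F : ℕ → ModuleCat.{u} R
  d : ∀ n, F (n + 1) →ₗ[R] F n
  ε : F 0 →ₗ[R] N
  projective : ∀ n, Module.Projective R (F n)
  surjective_ε : Function.Surjective ε
  exact_zero : Function.Exact (d 0) ε
  exact_succ : ∀ n, Function.Exact (d (n + 1)) (d n)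

namespace LinearProjectiveResolution

noncomputable def free (N : ModuleCat.{u} R) : LinearProjectiveResolution N where
  F n := ModuleCat.of R (freeSyzygy N n →₀ R)
  d n := (LinearMap.ker (Finsupp.linearCombination R id)).subtype ∘ₗ
    Finsupp.linearCombination R (id : freeSyzygy N (n + 1) → freeSyzygy N (n + 1))
  ε := Finsupp.linearCombination R (id : N → N)
  projective _ := inferInstance
  surjective_ε := Finsupp.linearCombination_id_surjective R N
  exact_zero := (Function.Surjective.comp_exact_iff_exact
    (Finsupp.linearCombination_id_surjective R _)).2 (LinearMap.exact_subtype_ker_map _)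
  exact_succ _ := (Function.Injective.comp_exact_iff_exact (Submodule.injective_subtype _)).2
    ((Function.Surjective.comp_exact_iff_exact
      (Finsupp.linearCombination_id_surjective R _)).2 (LinearMap.exact_subtype_ker_map _))

variable {N : ModuleCat.{u} R} (res : LinearProjectiveResolution N)

theorem ε_comp_d : res.ε ∘ₗ res.d 0 = 0 :=
  res.exact_zero.linearMap_comp_eq_zero

theorem d_comp_d (n : ℕ) : res.d n ∘ₗ res.d (n + 1) = 0 :=
  (res.exact_succ n).linearMap_comp_eq_zero

def HomExactAt (M : ModuleCat.{u} R) (s : ℕ) : Prop :=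
  ∀ f : res.F (s + 1) →ₗ[R] M, f ∘ₗ res.d (s + 1) = 0 →
    ∃ g : res.F s →ₗ[R] M, g ∘ₗ res.d s = f

def complex : ChainComplex (ModuleCat.{u} R) ℕ :=
  ChainComplex.of res.F (fun n => ModuleCat.ofHom (res.d n))
    (fun n => ModuleCat.hom_ext (by simpa using res.d_comp_d n))

theorem complex_d (n : ℕ) : res.complex.d (n + 1) n = ModuleCat.ofHom (res.d n) :=
  ChainComplex.of_d res.F (fun n => ModuleCat.ofHom (res.d n)) n

noncomputable def toProjectiveResolution : ProjectiveResolution N where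
  complex := res.complex
  projective n := (IsProjective.iff_projective (res.F n)).1 (res.projective n)
  π := (ChainComplex.toSingle₀Equiv _ _).symm
    ⟨ModuleCat.ofHom res.ε, by rw [res.complex_d]; exact ModuleCat.hom_ext res.ε_comp_d⟩
  quasiIso := ⟨fun n => by
    cases n with
    | zero =>
      rw [ChainComplex.quasiIsoAt₀_iff, ShortComplex.quasiIso_iff_of_zeros' _ rfl rfl rfl]
      refine (ShortComplex.exact_and_epi_g_iff_of_iso
        (S₂ := ShortComplex.mk (X₁ := res.F 1) (X₂ := res.F 0) (X₃ := N)
          (ModuleCat.ofHom (res.d 0)) (ModuleCat.ofHom res.ε)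
          (ModuleCat.hom_ext (by simpa using res.ε_comp_d))) ?_).2
        ⟨(ShortComplex.moduleCat_exact_iff _).2 fun x hx => (res.exact_zero x).1 hx,
          (ModuleCat.epi_iff_surjective _).2 res.surjective_ε⟩
      refine ShortComplex.isoMk (Iso.refl _) (Iso.refl _) (Iso.refl _) ?_ ?_
      · exact (Category.id_comp _).trans ((res.complex_d 0).symm.trans (Category.comp_id _).symm)
      · exact (Category.id_comp _).trans (Eq.trans (ChainComplex.toSingle₀Equiv_symm_apply_f_zero
          (C := res.complex) _ _).symm (Category.comp_id _).symm)
    | succ n =>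
      rw [quasiIsoAt_iff_exactAt' _ _ (ChainComplex.exactAt_succ_single_obj _ _),
        HomologicalComplex.exactAt_iff' _ (n + 2) (n + 1) n (by simp) (by simp),
        ShortComplex.moduleCat_exact_iff]
      intro (x : res.F (n + 1)) hx
      rw [HomologicalComplex.shortComplexFunctor'_obj_g, res.complex_d] at hx
      obtain ⟨y, hy⟩ := (res.exact_succ n x).1 hx
      refine ⟨y, ?_⟩
      change res.complex.d (n + 2) (n + 1) y = x
      rw [res.complex_d]
      exact hy⟩

theorem linearYonedaObj_d_ofHom (M : ModuleCat.{u} R) (n : ℕ) (h : res.F n →ₗ[R] M) :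
    (res.complex.linearYonedaObj ℤ M).d n (n + 1) (ModuleCat.ofHom h) =
      ModuleCat.ofHom (h ∘ₗ res.d n) := by
  rw [ChainComplex.linearYonedaObj_d]
  change res.complex.d (n + 1) n ≫ ModuleCat.ofHom h = _
  rw [res.complex_d]
  rfl

theorem extVanish_iff_homExactAt (M : ModuleCat.{u} R) (s : ℕ) :
    ExtVanish R (s + 1) N M ↔ res.HomExactAt M s := by
  rw [ExtVanish, ← ModuleCat.isZero_iff_subsingleton,
    (res.toProjectiveResolution.isoExt (s + 1) M).isZero_iff,
    ← HomologicalComplex.exactAt_iff_isZero_homology,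
    HomologicalComplex.exactAt_iff' _ s (s + 1) (s + 2) (by simp) (by simp),
    ShortComplex.moduleCat_exact_iff]
  constructor
  · intro h f hf
    obtain ⟨g, hg⟩ := h (ModuleCat.ofHom f) (by
      change (res.complex.linearYonedaObj ℤ M).d (s + 1) (s + 2) (ModuleCat.ofHom f) = 0
      rw [res.linearYonedaObj_d_ofHom, hf]
      rfl)
    let g' : res.F s ⟶ M := g
    have hg' : (res.complex.linearYonedaObj ℤ M).d s (s + 1) (ModuleCat.ofHom g'.hom) =
        ModuleCat.ofHom f := hg
    rw [res.linearYonedaObj_d_ofHom] at hg'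
    exact ⟨g'.hom, congrArg ModuleCat.Hom.hom hg'⟩
  · intro h f hf
    let f' : res.F (s + 1) ⟶ M := f
    have hf' : (res.complex.linearYonedaObj ℤ M).d (s + 1) (s + 2) (ModuleCat.ofHom f'.hom) = 0 :=
      hf
    rw [res.linearYonedaObj_d_ofHom] at hf'
    obtain ⟨g, hg⟩ := h f'.hom (congrArg ModuleCat.Hom.hom hf')
    refine ⟨ModuleCat.ofHom g, ?_⟩
    change (res.complex.linearYonedaObj ℤ M).d s (s + 1) (ModuleCat.ofHom g) = f
    rw [res.linearYonedaObj_d_ofHom, hg]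
    rfl

def shift : LinearProjectiveResolution (ModuleCat.of R (LinearMap.range (res.d 0))) where
  F n := res.F (n + 1)
  d n := res.d (n + 1)
  ε := (res.d 0).rangeRestrict
  projective n := res.projective (n + 1)
  surjective_ε := LinearMap.surjective_rangeRestrict _
  exact_zero := (res.exact_succ 0).rangeRestrict
  exact_succ n := res.exact_succ (n + 1)

theorem extVanish_succ_succ_iff_shift (M : ModuleCat.{u} R) (s : ℕ) :
    ExtVanish R (s + 2) N M ↔
      ExtVanish R (s + 1) (ModuleCat.of R (LinearMap.range (res.d 0))) M := by
  rw [res.extVanish_iff_homExactAt, res.shift.extVanish_iff_homExactAt]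
  rfl

end LinearProjectiveResolution

open LinearMap LinearProjectiveResolution

theorem extVanish_of_injective {E : ModuleCat.{u} R} (hE : Module.Injective R E)
    (X : ModuleCat.{u} R) (s : ℕ) : ExtVanish R (s + 1) X E := by
  let res := free X
  rw [res.extVanish_iff_homExactAt]
  exact (res.exact_succ s).exists_desc_of_injective hE

theorem ExtVanish.of_linearEquiv {n : ℕ} {X A B : ModuleCat.{u} R} (e : A ≃ₗ[R] B)
    (h : ExtVanish R n X A) : ExtVanish R n X B :=
  @Equiv.subsingleton _ _
    (((_root_.Ext ℤ (ModuleCat.{u} R) n).obj (Opposite.op X)).mapIso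
      e.toModuleIso).symm.toLinearEquiv.toEquiv h

theorem exists_shortExactSeq_injective (M : ModuleCat.{u} R) :
    ∃ (E C : ModuleCat.{u} R) (ι : M →ₗ[R] E) (p : E →ₗ[R] C),
      ShortExactSeq R M E C ι p ∧ Module.Injective R E :=
  ⟨Injective.under M, ModuleCat.of R (↥(Injective.under M) ⧸ LinearMap.range (Injective.ι M).hom),
    (Injective.ι M).hom, (LinearMap.range _).mkQ,
    ⟨(ModuleCat.mono_iff_injective _).1 inferInstance, Submodule.mkQ_surjective _,
      LinearMap.exact_map_mkQ_range _⟩,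
    Module.injective_module_of_injective_object (inj := inferInstanceAs
      (CategoryTheory.Injective (Injective.under M))) _ _⟩

namespace ShortExactSeq

variable {A B C X : ModuleCat.{u} R} {ι : A →ₗ[R] B} {p : B →ₗ[R] C}

theorem extVanish_right (hses : ShortExactSeq R A B C ι p) {s : ℕ}
    (hB : ExtVanish R (s + 1) X B) (hA : ExtVanish R (s + 2) X A) : ExtVanish R (s + 1) X C := by
  obtain ⟨hι, hp, hex⟩ := hses
  let res := free X
  rw [res.extVanish_iff_homExactAt] at hB hA ⊢
  intro f hf
  obtain ⟨f', hf'⟩ := Module.projective_lifting_property (h := res.projective (s + 1)) p f hp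
  obtain ⟨a, ha⟩ := hex.exists_lift hι (f' ∘ₗ res.d (s + 1)) (by
    rw [← comp_assoc, hf', hf])
  obtain ⟨q, hq⟩ := hA a ((cancel_left hι).1 (by
    rw [← comp_assoc, ha, comp_assoc, res.d_comp_d, comp_zero, comp_zero]))
  obtain ⟨w, hw⟩ := hB (f' - ι ∘ₗ q) (by rw [sub_comp, comp_assoc, hq, ha, sub_self])
  refine ⟨p ∘ₗ w, ?_⟩
  rw [comp_assoc, hw, comp_sub, hf', ← comp_assoc, hex.linearMap_comp_eq_zero, zero_comp,
    sub_zero]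

theorem extVanish_left (hses : ShortExactSeq R A B C ι p) {s : ℕ}
    (hB : ExtVanish R (s + 2) X B) (hC : ExtVanish R (s + 1) X C) : ExtVanish R (s + 2) X A := by
  obtain ⟨hι, hp, hex⟩ := hses
  let res := free X
  rw [res.extVanish_iff_homExactAt] at hB hC ⊢
  intro f hf
  obtain ⟨b, hb⟩ := hB (ι ∘ₗ f) (by rw [comp_assoc, hf, comp_zero])
  obtain ⟨c, hc⟩ := hC (p ∘ₗ b) (by
    rw [comp_assoc, hb, ← comp_assoc, hex.linearMap_comp_eq_zero, zero_comp])
  obtain ⟨c', hc'⟩ := Module.projective_lifting_property (h := res.projective s) p c hp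
  obtain ⟨g, hg⟩ := hex.exists_lift hι (b - c' ∘ₗ res.d s) (by
    rw [comp_sub, ← comp_assoc, hc', hc, sub_self])
  refine ⟨g, (cancel_left hι).1 ?_⟩
  rw [← comp_assoc, hg, sub_comp, comp_assoc, res.d_comp_d, comp_zero, sub_zero, hb]

theorem exists_comp_eq_of_extVanish (hses : ShortExactSeq R A B C ι p)
    (hA : ExtVanish R 1 X A) (c : X →ₗ[R] C) : ∃ b : X →ₗ[R] B, p ∘ₗ b = c := by
  obtain ⟨hι, hp, hex⟩ := hses
  let res := free X
  rw [res.extVanish_iff_homExactAt] at hA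
  obtain ⟨b₀, hb₀⟩ :=
    Module.projective_lifting_property (h := res.projective 0) p (c ∘ₗ res.ε) hp
  obtain ⟨a, ha⟩ := hex.exists_lift hι (b₀ ∘ₗ res.d 0) (by
    rw [← comp_assoc, hb₀, comp_assoc, res.ε_comp_d, comp_zero])
  obtain ⟨a', ha'⟩ := hA a ((cancel_left hι).1 (by
    rw [← comp_assoc, ha, comp_assoc, res.d_comp_d, comp_zero, comp_zero]))
  obtain ⟨b, hb⟩ := res.exact_zero.exists_desc res.surjective_ε (b₀ - ι ∘ₗ a') (by
    rw [sub_comp, comp_assoc, ha', ha, sub_self])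
  refine ⟨b, (cancel_right res.surjective_ε).1 ?_⟩
  rw [comp_assoc, hb, comp_sub, hb₀, ← comp_assoc, hex.linearMap_comp_eq_zero, zero_comp,
    sub_zero]

theorem extVanish_one_left (hses : ShortExactSeq R A B C ι p)
    (hlift : ∀ c : X →ₗ[R] C, ∃ b : X →ₗ[R] B, p ∘ₗ b = c) (hB : ExtVanish R 1 X B) :
    ExtVanish R 1 X A := by
  obtain ⟨hι, hp, hex⟩ := hses
  let res := free X
  rw [res.extVanish_iff_homExactAt] at hB ⊢
  intro f hf
  obtain ⟨b₀, hb₀⟩ := hB (ι ∘ₗ f) (by rw [comp_assoc, hf, comp_zero])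
  obtain ⟨c, hc⟩ := res.exact_zero.exists_desc res.surjective_ε (p ∘ₗ b₀) (by
    rw [comp_assoc, hb₀, ← comp_assoc, hex.linearMap_comp_eq_zero, zero_comp])
  obtain ⟨b, hb⟩ := hlift c
  obtain ⟨g, hg⟩ := hex.exists_lift hι (b₀ - b ∘ₗ res.ε) (by
    rw [comp_sub, ← comp_assoc, hb, hc, sub_self])
  refine ⟨g, (cancel_left hι).1 ?_⟩
  rw [← comp_assoc, hg, sub_comp, comp_assoc, res.ε_comp_d, comp_zero, sub_zero, hb₀]

theorem extVanish_succ_succ_iff (hses : ShortExactSeq R A B C ι p) (hB : Module.Injective R B)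
    (X : ModuleCat.{u} R) (s : ℕ) : ExtVanish R (s + 2) X A ↔ ExtVanish R (s + 1) X C :=
  ⟨hses.extVanish_right (extVanish_of_injective hB X s),
    hses.extVanish_left (extVanish_of_injective hB X (s + 1))⟩

theorem injective_of_extVanish (hses : ShortExactSeq R A B C ι p) (hB : Module.Injective R B)
    (h : ExtVanish R 1 C A) : Module.Injective R A := by
  obtain ⟨σ, hσ⟩ := hses.exists_comp_eq_of_extVanish h LinearMap.id
  obtain ⟨hι, hp, hex⟩ := hses
  obtain ⟨ρ, hρ⟩ : ∃ ρ : B →ₗ[R] A, ρ ∘ₗ ι = LinearMap.id :=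
    ((hex.split_tfae hι hp).out 0 1).1 (by exact ⟨σ, hσ⟩)
  exact Module.Injective.of_retract hB ι ρ hρ

end ShortExactSeq

theorem weakInjective_of_injective {E : ModuleCat.{u} R} (hE : Module.Injective R E) :
    WeakInjective R E :=
  fun N _ => extVanish_of_injective hE N 0

theorem SuperFinitelyPresented.exists_resolution {N : ModuleCat.{u} R}
    (hN : SuperFinitelyPresented R N) : ∃ res : LinearProjectiveResolution N,
      SuperFinitelyPresented R (ModuleCat.of R (LinearMap.range (res.d 0))) := by
  obtain ⟨F, d, ε, hfin, hproj, hε, hex₀, hex⟩ := hN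
  exact ⟨⟨F, d, ε, hproj, hε, hex₀, hex⟩, fun n => F (n + 1), fun n => d (n + 1),
    (d 0).rangeRestrict, fun n => hfin (n + 1), fun n => hproj (n + 1),
    LinearMap.surjective_rangeRestrict _, (hex 0).rangeRestrict, fun n => hex (n + 1)⟩

theorem WidLE.succ {M : ModuleCat.{u} R} {k : ℕ} (hk : WidLE R M k) : WidLE R M (k + 1) := by
  intro N hN
  obtain ⟨res, hΩ⟩ := hN.exists_resolution
  exact (res.extVanish_succ_succ_iff_shift M k).2 (hk _ hΩ)

theorem ShortExactSeq.widLE_right {M E C : ModuleCat.{u} R} {ι : M →ₗ[R] E} {p : E →ₗ[R] C}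
    (hses : ShortExactSeq R M E C ι p) (hE : Module.Injective R E) {k : ℕ}
    (hk : WidLE R M (k + 1)) : WidLE R C k :=
  fun N hN => (hses.extVanish_succ_succ_iff hE N k).1 (hk N hN)

theorem IsTotallyAcyclicInjComplex.extVanish_range {T : ℤ → ModuleCat.{u} R}
    {d : ∀ n : ℤ, T n →ₗ[R] T (n + 1)} (hT : IsTotallyAcyclicInjComplex R (WeakInjective R) T d)
    {W : ModuleCat.{u} R} (hW : WeakInjective R W) (s : ℕ) (t : ℤ) :
    ExtVanish R (s + 1) W (ModuleCat.of R (LinearMap.range (d t))) := by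
  obtain ⟨hinj, hexact, hhom⟩ := hT
  have hses (t : ℤ) : ShortExactSeq R (ModuleCat.of R (LinearMap.range (d t))) (T (t + 1))
      (ModuleCat.of R (LinearMap.range (d (t + 1)))) (LinearMap.range (d t)).subtype
      (d (t + 1)).rangeRestrict :=
    ⟨Submodule.injective_subtype _, LinearMap.surjective_rangeRestrict _,
      (hexact t).linearMap_rangeRestrict⟩
  induction s generalizing t with
  | zero =>
    refine (hses t).extVanish_one_left (fun c => ?_) (extVanish_of_injective (hinj (t + 1)) W 0)
    obtain ⟨b, hb⟩ := (hhom W hW (t + 1) ((LinearMap.range (d (t + 1))).subtype ∘ₗ c)).1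
      (LinearMap.ext fun w => (hexact (t + 1) _).2 (c w).2)
    exact ⟨b, LinearMap.ext fun w => Subtype.ext (LinearMap.congr_fun hb w)⟩
  | succ s ih => exact ((hses t).extVanish_succ_succ_iff (hinj (t + 1)) W s).2 (ih (t + 1))

theorem GorensteinWeakInjective.extVanish {G : ModuleCat.{u} R} (hG : GorensteinWeakInjective R G)
    {W : ModuleCat.{u} R} (hW : WeakInjective R W) (s : ℕ) : ExtVanish R (s + 1) W G := by
  obtain ⟨T, d, π, hT, hπ, hex⟩ := hG
  have hses : ShortExactSeq R (ModuleCat.of R (LinearMap.range (d (-1)))) (T 0) G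
      (LinearMap.range (d (-1))).subtype π :=
    ⟨Submodule.injective_subtype _, hπ, hex.range_subtype⟩
  exact (hses.extVanish_succ_succ_iff (hT.1 0) W s).1 (hT.extVanish_range hW (s + 1) (-1))

theorem GwidLE.extVanish {M : ModuleCat.{u} R} {n : ℕ} (hM : GwidLE R M n) {W : ModuleCat.{u} R}
    (hW : WeakInjective R W) (s : ℕ) : ExtVanish R (s + n + 1) W M := by
  induction n generalizing M s with
  | zero =>
    obtain ⟨G, d, ε, ⟨hε, hex₀, -, hvan⟩, hG⟩ := hM
    have hε' : Function.Surjective ε := fun y => (hex₀ y).1 (hvan 1 one_pos _)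
    exact ((hG 0).extVanish hW s).of_linearEquiv (LinearEquiv.ofBijective ε ⟨hε, hε'⟩).symm
  | succ n ih =>
    obtain ⟨G, d, ε, ⟨hε, hex₀, hex, hvan⟩, hG⟩ := hM
    have hD : GwidLE R (ModuleCat.of R (LinearMap.range (d 0))) n :=
      ⟨fun i => G (i + 1), fun i => d (i + 1), (LinearMap.range (d 0)).subtype,
        ⟨Submodule.injective_subtype _, (hex 0).range_subtype, fun i => hex (i + 1),
          fun i hi => hvan (i + 1) (by omega)⟩, fun i => hG (i + 1)⟩
    have hses : ShortExactSeq R M (G 0) (ModuleCat.of R (LinearMap.range (d 0))) ε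
        (d 0).rangeRestrict :=
      ⟨hε, LinearMap.surjective_rangeRestrict _, hex₀.rangeRestrict⟩
    exact hses.extVanish_left (s := s + n) ((hG 0).extVanish hW (s + n + 1)) (ih hD s)

theorem injective_of_widLE_of_extVanish {M : ModuleCat.{u} R} {k : ℕ} (hk : WidLE R M k)
    (hM : ∀ W, WeakInjective R W → ∀ s, ExtVanish R (s + 1) W M) : Module.Injective R M := by
  induction k generalizing M with
  | zero =>
    obtain ⟨E, C, ι, p, hses, hE⟩ := exists_shortExactSeq_injective M
    exact hses.injective_of_extVanish hE (hM C (hses.widLE_right hE hk.succ) 0)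
  | succ k ih =>
    obtain ⟨E, C, ι, p, hses, hE⟩ := exists_shortExactSeq_injective M
    have hC : Module.Injective R C := ih (hses.widLE_right hE hk) fun W hW s =>
      (hses.extVanish_succ_succ_iff hE W s).1 (hM W hW (s + 1))
    exact hses.injective_of_extVanish hE (hM C (weakInjective_of_injective hC) 0)

abbrev consModule (E : ModuleCat.{u} R) (G : ℕ → ModuleCat.{u} R) : ℕ → ModuleCat.{u} R
  | 0 => E
  | i + 1 => G i

def consMap {E : ModuleCat.{u} R} {G : ℕ → ModuleCat.{u} R} (d₀ : E →ₗ[R] G 0)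
    (d : ∀ i, G i →ₗ[R] G (i + 1)) : ∀ i, consModule E G i →ₗ[R] consModule E G (i + 1)
  | 0 => d₀
  | i + 1 => d i

theorem IsFiniteCoresolution.cons {M E C : ModuleCat.{u} R} {ι : M →ₗ[R] E} {p : E →ₗ[R] C}
    (hses : ShortExactSeq R M E C ι p) {n : ℕ} {G : ℕ → ModuleCat.{u} R}
    {d : ∀ i, G i →ₗ[R] G (i + 1)} {ε : C →ₗ[R] G 0} (hC : IsFiniteCoresolution R C n G d ε) :
    IsFiniteCoresolution R M (n + 1) (consModule E G) (consMap (ε ∘ₗ p) d) ι := by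
  obtain ⟨hι, hp, hex⟩ := hses
  obtain ⟨hε, hex₀, hex', hvan⟩ := hC
  refine ⟨hι, (Function.Injective.comp_exact_iff_exact hε).2 hex, ?_, ?_⟩
  · rintro (_ | i)
    · exact (Function.Surjective.comp_exact_iff_exact hp).2 hex₀
    · exact hex' i
  · rintro (_ | i) hi
    · omega
    · exact hvan i (by omega)

theorem ShortExactSeq.idLE_succ {M E C : ModuleCat.{u} R} {ι : M →ₗ[R] E} {p : E →ₗ[R] C}
    (hses : ShortExactSeq R M E C ι p) (hE : Module.Injective R E) {n : ℕ} (hC : IdLE R C n) :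
    IdLE R M (n + 1) := by
  obtain ⟨G, d, ε, hres, hG⟩ := hC
  exact ⟨consModule E G, consMap (ε ∘ₗ p) d, ι, hres.cons hses, fun | 0 => hE | i + 1 => hG i⟩

theorem idLE_zero {M : ModuleCat.{u} R} (hM : Module.Injective R M) : IdLE R M 0 := by
  refine ⟨consModule M fun _ => ModuleCat.of R PUnit, consMap 0 fun _ => 0, LinearMap.id,
    ⟨Function.injective_id, (LinearMap.exact_zero_iff_surjective _ _).2 Function.surjective_id,
      ?_, ?_⟩, ?_⟩
  · rintro (_ | _) <;>
      exact (LinearMap.exact_zero_iff_injective _ _).2 (Function.injective_of_subsingleton _)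
  · rintro (_ | _) hi x
    · omega
    · exact Subsingleton.elim _ _
  · rintro (_ | _)
    · exact hM
    · exact Module.injective_of_subsingleton _

theorem idLE_of_widLE_of_extVanish {M : ModuleCat.{u} R} {k n : ℕ} (hk : WidLE R M k)
    (hM : ∀ W, WeakInjective R W → ∀ s, ExtVanish R (s + n + 1) W M) : IdLE R M n := by
  induction n generalizing M with
  | zero => exact idLE_zero (injective_of_widLE_of_extVanish hk hM)
  | succ n ih =>
    obtain ⟨E, C, ι, p, hses, hE⟩ := exists_shortExactSeq_injective M
    exact hses.idLE_succ hE (ih (hses.widLE_right hE hk.succ) fun W hW s =>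
      (hses.extVanish_succ_succ_iff hE W (s + n)).1 (hM W hW s))

theorem GwidLE.idLE {M : ModuleCat.{u} R} {n k : ℕ} (hn : GwidLE R M n) (hk : WidLE R M k) :
    IdLE R M n :=
  idLE_of_widLE_of_extVanish hk fun _ hW s => hn.extVanish hW s

theorem gorensteinWeakInjective_of_injective {E : ModuleCat.{u} R} (hE : Module.Injective R E) :
    GorensteinWeakInjective R E := by
  let d : ℤ → (E →ₗ[R] E) := fun t => if Even t then LinearMap.id else 0
  have hd (t : ℤ) (x : E) : d t x = if Even t then x else 0 := by
    simp only [d]; split_ifs <;> rfl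
  refine ⟨fun _ => E, d, LinearMap.id, ⟨fun _ => hE, Function.exact_of_eq_ite_even _ hd,
    fun W _ => Function.exact_of_eq_ite_even (fun t g => (d t).comp g) fun t g => ?_⟩,
    Function.surjective_id, ?_⟩
  · simp only [d]; split_ifs <;> simp
  · rw [show d (-1) = 0 from if_neg (by decide)]
    exact (LinearMap.exact_zero_iff_injective _ _).2 Function.injective_id

theorem IdLE.gwidLE {M : ModuleCat.{u} R} {n : ℕ} (h : IdLE R M n) : GwidLE R M n :=
  let ⟨G, d, ε, hres, hG⟩ := h
  ⟨G, d, ε, hres, fun i => gorensteinWeakInjective_of_injective (hG i)⟩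

end

/-- `Gwid_R M ≤ id_R M`, with equality when the weak injective dimension of `M` is
finite. -/
theorem gwid_le_idim (M : ModuleCat.{u} R) :
    Gwid R M ≤ Idim R M ∧ ((∃ k : ℕ, WidLE R M k) → Gwid R M = Idim R M) := by
  have hle : Gwid R M ≤ Idim R M := sInf_le_sInf fun _ ⟨n, hc, hn⟩ => ⟨n, hc, hn.gwidLE⟩
  refine ⟨hle, fun ⟨k, hk⟩ => le_antisymm hle (le_sInf ?_)⟩
  rintro _ ⟨n, rfl, hn⟩
  exact sInf_le ⟨n, rfl, hn.idLE hk⟩
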